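/- Let (M,g,X) satisfy the horizon Einstein equation in dimension 2. Then the full covariant derivative of X is determined: ∇_a X_b = ½ X_a X_b + (λ - ½R) g_ab + ½ Ω ε_ab, where R is the scalar curvature, ε the volume form, and Ω = ⋆dX♭. -/

import Mathlib

noncomputable section

open scoped BigOperators

/-- Partial derivative of a function on `ℝⁿ` in the `i`-th coordinate direction. -/
def pd {n : ℕ} (i : Fin n) (f : (Fin n → ℝ) → ℝ) (x : Fin n → ℝ) : ℝ :=
  fderiv ℝ f x (Pi.single i 1)

/-- Christoffel symbols `Γ^k_{ij}` of a metric `g` with inverse `ginv`. -/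
def christoffel {n : ℕ} (g ginv : (Fin n → ℝ) → Matrix (Fin n) (Fin n) ℝ)
    (k i j : Fin n) (x : Fin n → ℝ) : ℝ :=
  (1/2) * ∑ l, ginv x k l *
    (pd i (fun y => g y j l) x + pd j (fun y => g y i l) x - pd l (fun y => g y i j) x)

/-- Ricci tensor `R_{ij}` in coordinates. -/
def ricci {n : ℕ} (g ginv : (Fin n → ℝ) → Matrix (Fin n) (Fin n) ℝ)
    (i j : Fin n) (x : Fin n → ℝ) : ℝ :=
  (∑ k, pd k (christoffel g ginv k i j) x)
  - (∑ k, pd j (christoffel g ginv k i k) x)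
  + (∑ k, ∑ l, christoffel g ginv k k l x * christoffel g ginv l i j x)
  - (∑ k, ∑ l, christoffel g ginv k j l x * christoffel g ginv l i k x)

/-- Covariant derivative `∇_a ω_b` of a one-form. -/
def covd {n : ℕ} (g ginv : (Fin n → ℝ) → Matrix (Fin n) (Fin n) ℝ)
    (ω : Fin n → (Fin n → ℝ) → ℝ) (a b : Fin n) (x : Fin n → ℝ) : ℝ :=
  pd a (ω b) x - ∑ c, christoffel g ginv c a b x * ω c x

/-- Raise the index of a one-form, producing vector-field components. -/
def raise {n : ℕ} (ginv : (Fin n → ℝ) → Matrix (Fin n) (Fin n) ℝ)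
    (ω : Fin n → (Fin n → ℝ) → ℝ) (a : Fin n) (x : Fin n → ℝ) : ℝ :=
  ∑ b, ginv x a b * ω b x

/-- Lie derivative `(L_V g)_{ij}` of the metric along a vector field `V`. -/
def lieMetric {n : ℕ} (g : (Fin n → ℝ) → Matrix (Fin n) (Fin n) ℝ)
    (V : Fin n → (Fin n → ℝ) → ℝ) (i j : Fin n) (x : Fin n → ℝ) : ℝ :=
  (∑ k, V k x * pd k (fun y => g y i j) x)
  + (∑ k, g x k j * pd i (V k) x) + (∑ k, g x i k * pd j (V k) x)

/-- The horizon Einstein equation `Ric = ½ X♭⊗X♭ − ½ L_X g + λ g` at a point,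
for the one-form `ω = X♭` (with `X` its `g`-dual vector field). -/
def HorizonEq {n : ℕ} (g ginv : (Fin n → ℝ) → Matrix (Fin n) (Fin n) ℝ)
    (ω : Fin n → (Fin n → ℝ) → ℝ) (lam : ℝ) (x : Fin n → ℝ) : Prop :=
  ∀ i j, ricci g ginv i j x =
    (1/2) * ω i x * ω j x - (1/2) * lieMetric g (raise ginv ω) i j x + lam * g x i j

/-- The scalar curvature `R = g^{ij} R_{ij}`. -/
def scalarCurv {n : ℕ} (g ginv : (Fin n → ℝ) → Matrix (Fin n) (Fin n) ℝ)
    (x : Fin n → ℝ) : ℝ :=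
  ∑ i, ∑ j, ginv x i j * ricci g ginv i j x

/-- The Riemannian volume form `ε_{ab}` of an oriented 2-dimensional metric. -/
def volForm2 (g : (Fin 2 → ℝ) → Matrix (Fin 2) (Fin 2) ℝ)
    (a b : Fin 2) (x : Fin 2 → ℝ) : ℝ :=
  (if (a, b) = (0, 1) then (1 : ℝ) else if (a, b) = (1, 0) then -1 else 0) *
    Real.sqrt ((g x).det)

/-- The Hodge star of a one-form in 2 dimensions: `(⋆α)_a = ε_{ac} g^{cb} α_b`. -/
def hodgeOne (g ginv : (Fin 2 → ℝ) → Matrix (Fin 2) (Fin 2) ℝ)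
    (α : Fin 2 → (Fin 2 → ℝ) → ℝ) (a : Fin 2) (x : Fin 2 → ℝ) : ℝ :=
  ∑ c, ∑ b, volForm2 g a c x * ginv x c b * α b x

/-- The function `Ω = ⋆ dX♭` in 2 dimensions. -/
def hodgeDX (g : (Fin 2 → ℝ) → Matrix (Fin 2) (Fin 2) ℝ)
    (ω : Fin 2 → (Fin 2 → ℝ) → ℝ) (x : Fin 2 → ℝ) : ℝ :=
  (pd 0 (ω 1) x - pd 1 (ω 0) x) / Real.sqrt ((g x).det)

section helpers

variable {n : ℕ} {U : Set (Fin n → ℝ)} {p : Fin n → ℝ} {i : Fin n}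
  {f f' h : (Fin n → ℝ) → ℝ}

lemma pd_congr_on (hU : IsOpen U) (hp : p ∈ U)
    (hff' : ∀ y ∈ U, f y = f' y) : pd i f p = pd i f' p := by
  unfold pd
  rw [Filter.EventuallyEq.fderiv_eq ?_]
  filter_upwards [hU.mem_nhds hp] with y hy using hff' y hy

lemma pd_const (c : ℝ) : pd i (fun _ => c) p = 0 := by
  simp [pd]

lemma pd_add (hf : DifferentiableAt ℝ f p) (hg : DifferentiableAt ℝ h p) :
    pd i (fun y => f y + h y) p = pd i f p + pd i h p := by
  simp [pd, fderiv_fun_add hf hg]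

lemma pd_sub (hf : DifferentiableAt ℝ f p) (hg : DifferentiableAt ℝ h p) :
    pd i (fun y => f y - h y) p = pd i f p - pd i h p := by
  simp [pd, fderiv_fun_sub hf hg]

lemma pd_mul (hf : DifferentiableAt ℝ f p) (hg : DifferentiableAt ℝ h p) :
    pd i (fun y => f y * h y) p = pd i f p * h p + f p * pd i h p := by
  simp [pd, fderiv_fun_mul hf hg]; ring

lemma pd_const_mul (hf : DifferentiableAt ℝ f p) (c : ℝ) :
    pd i (fun y => c * f y) p = c * pd i f p := by
  simp [pd, fderiv_const_mul hf]

lemma pd_sum {s : Finset (Fin n)} {F : Fin n → (Fin n → ℝ) → ℝ}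
    (hF : ∀ j ∈ s, DifferentiableAt ℝ (F j) p) :
    pd i (fun y => ∑ j ∈ s, F j y) p = ∑ j ∈ s, pd i (F j) p := by
  simp [pd, fderiv_fun_sum hF]

lemma contDiffOn_pd (hU : IsOpen U) (hf : ContDiffOn ℝ (⊤ : ℕ∞) f U) :
    ContDiffOn ℝ (⊤ : ℕ∞) (pd i f) U := by
  have h1 : ContDiffOn ℝ (⊤ : ℕ∞) (fderiv ℝ f) U := hf.fderiv_of_isOpen hU (by simp)
  exact (ContinuousLinearMap.apply ℝ ℝ (Pi.single i 1)).contDiff.comp_contDiffOn h1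

lemma diffAt_of_contDiffOn (hU : IsOpen U) (hp : p ∈ U) (hf : ContDiffOn ℝ (⊤ : ℕ∞) f U) :
    DifferentiableAt ℝ f p :=
  (hf.contDiffAt (hU.mem_nhds hp)).differentiableAt (by simp)

lemma pd_comm (hU : IsOpen U) (hp : p ∈ U) (hf : ContDiffOn ℝ (⊤ : ℕ∞) f U) (a b : Fin n) :
    pd a (pd b f) p = pd b (pd a f) p := by
  have hfa : ContDiffAt ℝ (⊤ : ℕ∞) f p := hf.contDiffAt (hU.mem_nhds hp)
  have hsym : IsSymmSndFDerivAt ℝ f p := hfa.isSymmSndFDerivAt (by rw [minSmoothness_of_isRCLikeNormedField]; exact WithTop.coe_le_coe.mpr (le_top : (2 : ℕ∞) ≤ ⊤))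
  have hd : DifferentiableAt ℝ (fderiv ℝ f) p :=
    ((hf.fderiv_of_isOpen (m := (⊤ : ℕ∞)) hU (by simp)).contDiffAt (hU.mem_nhds hp)).differentiableAt (by simp)
  have h1 : ∀ (v w : Fin n → ℝ), fderiv ℝ (fun y => fderiv ℝ f y w) p v
      = fderiv ℝ (fderiv ℝ f) p v w := by
    intro v w
    rw [fderiv_clm_apply hd (differentiableAt_const w)]
    simp
  unfold pd
  rw [h1, h1, hsym]
end helpers

set_option maxHeartbeats 4000000 in
/-- For a 2-dimensional solution of the horizon Einstein equation
$\mathrm{Ric}(g) = ½X^♭⊗X^♭ - ½L_Xg + λg$, the full covariant derivative of the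
one-form $X^♭$ is determined:
$∇_a X_b = ½X_aX_b + (λ - ½R)g_{ab} + ½Ωε_{ab}$, where $R$ is the scalar curvature,
$ε$ the volume form and $Ω = ⋆dX^♭$. -/
theorem prolonged_horizon_equation
    (g ginv : (Fin 2 → ℝ) → Matrix (Fin 2) (Fin 2) ℝ)
    (ω : Fin 2 → (Fin 2 → ℝ) → ℝ) (lam : ℝ)
    (U : Set (Fin 2 → ℝ)) (hU : IsOpen U)
    (hg_smooth : ∀ i j, ContDiffOn ℝ (⊤ : ℕ∞) (fun y => g y i j) U)
    (hginv_smooth : ∀ i j, ContDiffOn ℝ (⊤ : ℕ∞) (fun y => ginv y i j) U)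
    (hω_smooth : ∀ i, ContDiffOn ℝ (⊤ : ℕ∞) (ω i) U)
    (hg_symm : ∀ p ∈ U, (g p).IsSymm)
    (hg_det : ∀ p ∈ U, 0 < (g p).det)
    (hginv : ∀ p ∈ U, g p * ginv p = 1)
    (hHor : ∀ p ∈ U, HorizonEq g ginv ω lam p) :
    ∀ p ∈ U, ∀ a b,
      covd g ginv ω a b p =
        (1/2) * ω a p * ω b p + (lam - (1/2) * scalarCurv g ginv p) * g p a b
          + (1/2) * hodgeDX g ω p * volForm2 g a b p := by
  intro p hp
  -- basic differentiability facts
  have dg : ∀ i j : Fin 2, DifferentiableAt ℝ (fun y => g y i j) p :=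
    fun i j => diffAt_of_contDiffOn hU hp (hg_smooth i j)
  have dgi : ∀ i j : Fin 2, DifferentiableAt ℝ (fun y => ginv y i j) p :=
    fun i j => diffAt_of_contDiffOn hU hp (hginv_smooth i j)
  have dpg : ∀ k i j : Fin 2, DifferentiableAt ℝ (pd k (fun y => g y i j)) p :=
    fun k i j => diffAt_of_contDiffOn hU hp (contDiffOn_pd hU (hg_smooth i j))
  have dω : ∀ i : Fin 2, DifferentiableAt ℝ (ω i) p :=
    fun i => diffAt_of_contDiffOn hU hp (hω_smooth i)
  have dbr : ∀ i j l : Fin 2, DifferentiableAt ℝ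
      (fun y => pd i (fun z => g z j l) y + pd j (fun z => g z i l) y
        - pd l (fun z => g z i j) y) p :=
    fun i j l => ((dpg i j l).add (dpg j i l)).sub (dpg l i j)
  -- derivative of the Christoffel symbols
  have hdΓ : ∀ a k i j : Fin 2, pd a (christoffel g ginv k i j) p =
      (1/2) * ∑ l, (pd a (fun y => ginv y k l) p *
          (pd i (fun y => g y j l) p + pd j (fun y => g y i l) p - pd l (fun y => g y i j) p)
        + ginv p k l * (pd a (pd i (fun y => g y j l)) p + pd a (pd j (fun y => g y i l)) p
            - pd a (pd l (fun y => g y i j)) p)) := by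
    intro a k i j
    unfold christoffel
    rw [pd_const_mul (DifferentiableAt.fun_sum (fun l _ => (dgi k l).fun_mul (dbr i j l))),
        pd_sum (fun l _ => (dgi k l).fun_mul (dbr i j l))]
    congr 1
    refine Finset.sum_congr rfl fun l _ => ?_
    rw [pd_mul (dgi k l) (dbr i j l),
        pd_sub ((dpg i j l).fun_add (dpg j i l)) (dpg l i j),
        pd_add (dpg i j l) (dpg j i l)]
  -- derivative of the raised vector field
  have hdV : ∀ a k : Fin 2, pd a (raise ginv ω k) p
      = ∑ l, (pd a (fun y => ginv y k l) p * ω l p + ginv p k l * pd a (ω l) p) := by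
    intro a k
    unfold raise
    rw [pd_sum (fun l _ => (dgi k l).fun_mul (dω l))]
    exact Finset.sum_congr rfl fun l _ => pd_mul (dgi k l) (dω l)
  -- symmetry facts
  have hgs : g p 1 0 = g p 0 1 := (hg_symm p hp).apply 0 1
  have hD10 : ∀ a : Fin 2, pd a (fun y => g y 1 0) p = pd a (fun y => g y 0 1) p :=
    fun a => pd_congr_on hU hp (fun y hy => (hg_symm y hy).apply 0 1)
  have hE10 : ∀ a b : Fin 2, pd a (pd b (fun y => g y 1 0)) p
      = pd a (pd b (fun y => g y 0 1)) p :=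
    fun a b => pd_congr_on hU hp
      (fun y hy => pd_congr_on hU hy (fun z hz => (hg_symm z hz).apply 0 1))
  have hEc : ∀ i j : Fin 2, pd 1 (pd 0 (fun y => g y i j)) p
      = pd 0 (pd 1 (fun y => g y i j)) p :=
    fun i j => pd_comm hU hp (hg_smooth i j) 1 0
  -- determinant and inverse entries
  have hdetp : (g p).det = g p 0 0 * g p 1 1 - g p 0 1 * g p 0 1 := by
    rw [Matrix.det_fin_two, hgs]
  have hE0 : g p 0 0 * g p 1 1 - g p 0 1 * g p 0 1 ≠ 0 := by
    rw [← hdetp]; exact (hg_det p hp).ne'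
  have hij : ∀ i j : Fin 2, (g p * ginv p) i j = (1 : Matrix (Fin 2) (Fin 2) ℝ) i j :=
    fun i j => by rw [hginv p hp]
  have hij2 : ∀ i j : Fin 2, (ginv p * g p) i j = (1 : Matrix (Fin 2) (Fin 2) ℝ) i j :=
    fun i j => by rw [mul_eq_one_comm.mp (hginv p hp)]
  have e00 : g p 0 0 * ginv p 0 0 + g p 0 1 * ginv p 1 0 = 1 := by
    simpa [Matrix.mul_apply, Fin.sum_univ_two, Matrix.one_apply] using hij 0 0
  have e01 : g p 0 0 * ginv p 0 1 + g p 0 1 * ginv p 1 1 = 0 := by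
    simpa [Matrix.mul_apply, Fin.sum_univ_two, Matrix.one_apply] using hij 0 1
  have e10 : g p 0 1 * ginv p 0 0 + g p 1 1 * ginv p 1 0 = 0 := by
    have := hij 1 0
    simp only [Matrix.mul_apply, Fin.sum_univ_two, Matrix.one_apply] at this
    rw [hgs] at this
    simpa using this
  have e11 : g p 0 1 * ginv p 0 1 + g p 1 1 * ginv p 1 1 = 1 := by
    have := hij 1 1
    simp only [Matrix.mul_apply, Fin.sum_univ_two, Matrix.one_apply] at this
    rw [hgs] at this
    simpa using this
  have f00 : ginv p 0 0 * g p 0 0 + ginv p 0 1 * g p 0 1 = 1 := by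
    have := hij2 0 0
    simp only [Matrix.mul_apply, Fin.sum_univ_two, Matrix.one_apply] at this
    rw [hgs] at this
    simpa using this
  have f01 : ginv p 0 0 * g p 0 1 + ginv p 0 1 * g p 1 1 = 0 := by
    simpa [Matrix.mul_apply, Fin.sum_univ_two, Matrix.one_apply] using hij2 0 1
  have f10 : ginv p 1 0 * g p 0 0 + ginv p 1 1 * g p 0 1 = 0 := by
    have := hij2 1 0
    simp only [Matrix.mul_apply, Fin.sum_univ_two, Matrix.one_apply] at this
    rw [hgs] at this
    simpa using this
  have f11 : ginv p 1 0 * g p 0 1 + ginv p 1 1 * g p 1 1 = 1 := by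
    simpa [Matrix.mul_apply, Fin.sum_univ_two, Matrix.one_apply] using hij2 1 1
  have hB00 : ginv p 0 0 = g p 1 1 * (g p 0 0 * g p 1 1 - g p 0 1 * g p 0 1)⁻¹ := by
    rw [← div_eq_mul_inv]
    rw [eq_div_iff hE0]
    linear_combination g p 1 1 * e00 - g p 0 1 * e10
  have hB10 : ginv p 1 0 = -(g p 0 1) * (g p 0 0 * g p 1 1 - g p 0 1 * g p 0 1)⁻¹ := by
    rw [← div_eq_mul_inv]
    rw [eq_div_iff hE0]
    linear_combination g p 0 0 * e10 - g p 0 1 * e00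
  have hB01 : ginv p 0 1 = -(g p 0 1) * (g p 0 0 * g p 1 1 - g p 0 1 * g p 0 1)⁻¹ := by
    rw [← div_eq_mul_inv]
    rw [eq_div_iff hE0]
    linear_combination g p 1 1 * e01 - g p 0 1 * e11
  have hB11 : ginv p 1 1 = g p 0 0 * (g p 0 0 * g p 1 1 - g p 0 1 * g p 0 1)⁻¹ := by
    rw [← div_eq_mul_inv]
    rw [eq_div_iff hE0]
    linear_combination g p 0 0 * e11 - g p 0 1 * e01
  -- derivative of the inverse metric
  have eqP : ∀ a i j : Fin 2,
      pd a (fun y => g y i 0) p * ginv p 0 j + g p i 0 * pd a (fun y => ginv y 0 j) p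
      + (pd a (fun y => g y i 1) p * ginv p 1 j + g p i 1 * pd a (fun y => ginv y 1 j) p)
        = 0 := by
    intro a i j
    have hz : pd a (fun y => g y i 0 * ginv y 0 j + g y i 1 * ginv y 1 j) p = 0 := by
      rw [pd_congr_on hU hp (f' := fun _ => (1 : Matrix (Fin 2) (Fin 2) ℝ) i j)
          (fun y hy => by
            simpa [Matrix.mul_apply, Fin.sum_univ_two] using
              congrFun (congrFun (hginv y hy) i) j),
        pd_const]
    rw [pd_add ((dg i 0).fun_mul (dgi 0 j)) ((dg i 1).fun_mul (dgi 1 j)),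
        pd_mul (dg i 0) (dgi 0 j), pd_mul (dg i 1) (dgi 1 j)] at hz
    exact hz
  have hP : ∀ a k j : Fin 2, pd a (fun y => ginv y k j) p =
      -(ginv p k 0 * (pd a (fun y => g y 0 0) p * ginv p 0 j
            + pd a (fun y => g y 0 1) p * ginv p 1 j)
        + ginv p k 1 * (pd a (fun y => g y 1 0) p * ginv p 0 j
            + pd a (fun y => g y 1 1) p * ginv p 1 j)) := by
    intro a k j
    have E0 := eqP a 0 j
    have E1 := eqP a 1 j
    rw [hgs] at E1
    fin_cases k
    · simp only [Fin.mk_zero, Fin.mk_one]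
      linear_combination (ginv p 0 0) * E0 + (ginv p 0 1) * E1
        - pd a (fun y => ginv y 0 j) p * f00 - pd a (fun y => ginv y 1 j) p * f01
    · simp only [Fin.mk_zero, Fin.mk_one]
      linear_combination (ginv p 1 0) * E0 + (ginv p 1 1) * E1
        - pd a (fun y => ginv y 0 j) p * f10 - pd a (fun y => ginv y 1 j) p * f11
  -- the symmetrized covariant derivative is the Lie derivative
  have hLie : ∀ a b : Fin 2, covd g ginv ω a b p + covd g ginv ω b a p
      = lieMetric g (raise ginv ω) a b p := by
    intro a b
    simp only [lieMetric, Fin.sum_univ_two]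
    simp only [hdV]
    simp only [covd, christoffel, raise, Fin.sum_univ_two]
    simp only [hP, hgs, hD10, hB00, hB01, hB10, hB11]
    clear hdΓ hdV eqP hP e00 e01 e10 e11 f00 f01 f10 f11 hij hij2
    fin_cases a <;> fin_cases b
    · simp only [Fin.mk_zero, Fin.mk_one, hD10, hE10, hEc, hgs]
      set G00 := g p 0 0
      set G01 := g p 0 1
      set G11 := g p 1 1
      set W0 := ω 0 p
      set W1 := ω 1 p
      set Q00 := pd 0 (ω 0) p
      set Q01 := pd 0 (ω 1) p
      set Q10 := pd 1 (ω 0) p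
      set Q11 := pd 1 (ω 1) p
      set D000 := pd 0 (fun y => g y 0 0) p
      set D001 := pd 0 (fun y => g y 0 1) p
      set D011 := pd 0 (fun y => g y 1 1) p
      set D100 := pd 1 (fun y => g y 0 0) p
      set D101 := pd 1 (fun y => g y 0 1) p
      set D111 := pd 1 (fun y => g y 1 1) p
      set S000 := pd 0 (pd 0 (fun y => g y 0 0)) p
      set S001 := pd 0 (pd 0 (fun y => g y 0 1)) p
      set S011 := pd 0 (pd 0 (fun y => g y 1 1)) p
      set S100 := pd 0 (pd 1 (fun y => g y 0 0)) p
      set S101 := pd 0 (pd 1 (fun y => g y 0 1)) p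
      set S111 := pd 0 (pd 1 (fun y => g y 1 1)) p
      set T00 := pd 1 (pd 1 (fun y => g y 0 0)) p
      set T01 := pd 1 (pd 1 (fun y => g y 0 1)) p
      set T11 := pd 1 (pd 1 (fun y => g y 1 1)) p
      set R := (G00 * G11 - G01 * G01)⁻¹ with hRdef
      have hR : (G00 * G11 - G01 * G01) * R = 1 := by
        rw [hRdef]; exact mul_inv_cancel₀ hE0
      clear_value G00 G01 G11 W0 W1 Q00 Q01 Q10 Q11 D000 D001 D011 D100 D101 D111 S000 S001 S011 S100 S101 S111 T00 T01 T11 R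
      linear_combination ((-2 : ℝ)*D000*G01*R*W1 + (2 : ℝ)*D000*G11*R*W0 + (2 : ℝ)*D001*G00*R*W1 + (-2 : ℝ)*D001*G01*R*W0 + (-2 : ℝ)*Q00) * hR
    · simp only [Fin.mk_zero, Fin.mk_one, hD10, hE10, hEc, hgs]
      set G00 := g p 0 0
      set G01 := g p 0 1
      set G11 := g p 1 1
      set W0 := ω 0 p
      set W1 := ω 1 p
      set Q00 := pd 0 (ω 0) p
      set Q01 := pd 0 (ω 1) p
      set Q10 := pd 1 (ω 0) p
      set Q11 := pd 1 (ω 1) p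
      set D000 := pd 0 (fun y => g y 0 0) p
      set D001 := pd 0 (fun y => g y 0 1) p
      set D011 := pd 0 (fun y => g y 1 1) p
      set D100 := pd 1 (fun y => g y 0 0) p
      set D101 := pd 1 (fun y => g y 0 1) p
      set D111 := pd 1 (fun y => g y 1 1) p
      set S000 := pd 0 (pd 0 (fun y => g y 0 0)) p
      set S001 := pd 0 (pd 0 (fun y => g y 0 1)) p
      set S011 := pd 0 (pd 0 (fun y => g y 1 1)) p
      set S100 := pd 0 (pd 1 (fun y => g y 0 0)) p
      set S101 := pd 0 (pd 1 (fun y => g y 0 1)) p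
      set S111 := pd 0 (pd 1 (fun y => g y 1 1)) p
      set T00 := pd 1 (pd 1 (fun y => g y 0 0)) p
      set T01 := pd 1 (pd 1 (fun y => g y 0 1)) p
      set T11 := pd 1 (pd 1 (fun y => g y 1 1)) p
      set R := (G00 * G11 - G01 * G01)⁻¹ with hRdef
      have hR : (G00 * G11 - G01 * G01) * R = 1 := by
        rw [hRdef]; exact mul_inv_cancel₀ hE0
      clear_value G00 G01 G11 W0 W1 Q00 Q01 Q10 Q11 D000 D001 D011 D100 D101 D111 S000 S001 S011 S100 S101 S111 T00 T01 T11 R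
      linear_combination ((-1 : ℝ)*D001*G01*R*W1 + D001*G11*R*W0 + D011*G00*R*W1 + (-1 : ℝ)*D011*G01*R*W0 + (-1 : ℝ)*D100*G01*R*W1 + D100*G11*R*W0 + D101*G00*R*W1 + (-1 : ℝ)*D101*G01*R*W0 + (-1 : ℝ)*Q01 + (-1 : ℝ)*Q10) * hR
    · simp only [Fin.mk_zero, Fin.mk_one, hD10, hE10, hEc, hgs]
      set G00 := g p 0 0
      set G01 := g p 0 1
      set G11 := g p 1 1
      set W0 := ω 0 p
      set W1 := ω 1 p
      set Q00 := pd 0 (ω 0) p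
      set Q01 := pd 0 (ω 1) p
      set Q10 := pd 1 (ω 0) p
      set Q11 := pd 1 (ω 1) p
      set D000 := pd 0 (fun y => g y 0 0) p
      set D001 := pd 0 (fun y => g y 0 1) p
      set D011 := pd 0 (fun y => g y 1 1) p
      set D100 := pd 1 (fun y => g y 0 0) p
      set D101 := pd 1 (fun y => g y 0 1) p
      set D111 := pd 1 (fun y => g y 1 1) p
      set S000 := pd 0 (pd 0 (fun y => g y 0 0)) p
      set S001 := pd 0 (pd 0 (fun y => g y 0 1)) p
      set S011 := pd 0 (pd 0 (fun y => g y 1 1)) p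
      set S100 := pd 0 (pd 1 (fun y => g y 0 0)) p
      set S101 := pd 0 (pd 1 (fun y => g y 0 1)) p
      set S111 := pd 0 (pd 1 (fun y => g y 1 1)) p
      set T00 := pd 1 (pd 1 (fun y => g y 0 0)) p
      set T01 := pd 1 (pd 1 (fun y => g y 0 1)) p
      set T11 := pd 1 (pd 1 (fun y => g y 1 1)) p
      set R := (G00 * G11 - G01 * G01)⁻¹ with hRdef
      have hR : (G00 * G11 - G01 * G01) * R = 1 := by
        rw [hRdef]; exact mul_inv_cancel₀ hE0
      clear_value G00 G01 G11 W0 W1 Q00 Q01 Q10 Q11 D000 D001 D011 D100 D101 D111 S000 S001 S011 S100 S101 S111 T00 T01 T11 R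
      linear_combination ((-1 : ℝ)*D001*G01*R*W1 + D001*G11*R*W0 + D011*G00*R*W1 + (-1 : ℝ)*D011*G01*R*W0 + (-1 : ℝ)*D100*G01*R*W1 + D100*G11*R*W0 + D101*G00*R*W1 + (-1 : ℝ)*D101*G01*R*W0 + (-1 : ℝ)*Q01 + (-1 : ℝ)*Q10) * hR
    · simp only [Fin.mk_zero, Fin.mk_one, hD10, hE10, hEc, hgs]
      set G00 := g p 0 0
      set G01 := g p 0 1
      set G11 := g p 1 1
      set W0 := ω 0 p
      set W1 := ω 1 p
      set Q00 := pd 0 (ω 0) p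
      set Q01 := pd 0 (ω 1) p
      set Q10 := pd 1 (ω 0) p
      set Q11 := pd 1 (ω 1) p
      set D000 := pd 0 (fun y => g y 0 0) p
      set D001 := pd 0 (fun y => g y 0 1) p
      set D011 := pd 0 (fun y => g y 1 1) p
      set D100 := pd 1 (fun y => g y 0 0) p
      set D101 := pd 1 (fun y => g y 0 1) p
      set D111 := pd 1 (fun y => g y 1 1) p
      set S000 := pd 0 (pd 0 (fun y => g y 0 0)) p
      set S001 := pd 0 (pd 0 (fun y => g y 0 1)) p
      set S011 := pd 0 (pd 0 (fun y => g y 1 1)) p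
      set S100 := pd 0 (pd 1 (fun y => g y 0 0)) p
      set S101 := pd 0 (pd 1 (fun y => g y 0 1)) p
      set S111 := pd 0 (pd 1 (fun y => g y 1 1)) p
      set T00 := pd 1 (pd 1 (fun y => g y 0 0)) p
      set T01 := pd 1 (pd 1 (fun y => g y 0 1)) p
      set T11 := pd 1 (pd 1 (fun y => g y 1 1)) p
      set R := (G00 * G11 - G01 * G01)⁻¹ with hRdef
      have hR : (G00 * G11 - G01 * G01) * R = 1 := by
        rw [hRdef]; exact mul_inv_cancel₀ hE0
      clear_value G00 G01 G11 W0 W1 Q00 Q01 Q10 Q11 D000 D001 D011 D100 D101 D111 S000 S001 S011 S100 S101 S111 T00 T01 T11 R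
      linear_combination ((-2 : ℝ)*D101*G01*R*W1 + (2 : ℝ)*D101*G11*R*W0 + (2 : ℝ)*D111*G00*R*W1 + (-2 : ℝ)*D111*G01*R*W0 + (-2 : ℝ)*Q11) * hR
  -- antisymmetric part
  have hAnti : ∀ a b : Fin 2, covd g ginv ω a b p - covd g ginv ω b a p
      = (if (a, b) = ((0 : Fin 2), (1 : Fin 2)) then (1:ℝ)
          else if (a, b) = (1, 0) then -1 else 0) * (pd 0 (ω 1) p - pd 1 (ω 0) p) := by
    intro a b
    fin_cases a <;> fin_cases b <;>
      (simp only [Fin.mk_zero, Fin.mk_one, covd, christoffel, Fin.sum_univ_two, hD10,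
        Prod.mk.injEq, Fin.ext_iff]
       norm_num
       try ring)
  -- the Hodge-star term
  have hsne : Real.sqrt ((g p).det) ≠ 0 := (Real.sqrt_pos.mpr (hg_det p hp)).ne'
  have hΩε : ∀ a b : Fin 2, (1/2) * hodgeDX g ω p * volForm2 g a b p
      = (1/2) * ((if (a, b) = ((0 : Fin 2), (1 : Fin 2)) then (1:ℝ)
          else if (a, b) = (1, 0) then -1 else 0)) * (pd 0 (ω 1) p - pd 1 (ω 0) p) := by
    intro a b
    fin_cases a <;> fin_cases b <;>
      (simp only [Fin.mk_zero, Fin.mk_one, hodgeDX, volForm2, Prod.mk.injEq, Fin.ext_iff]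
       norm_num
       try (rw [mul_assoc, div_mul_cancel₀ _ hsne]))
  -- in dimension 2, the Ricci tensor is half the scalar curvature times the metric
  have hRic : ∀ i j : Fin 2, ricci g ginv i j p = (1/2) * scalarCurv g ginv p * g p i j := by
    intro i j
    simp only [scalarCurv, ricci, Fin.sum_univ_two, hdΓ]
    simp only [christoffel, Fin.sum_univ_two]
    simp only [hP, hE10, hEc, hD10, hgs, hB00, hB01, hB10, hB11]
    clear hdΓ hdV eqP hP e00 e01 e10 e11 f00 f01 f10 f11 hij hij2
    fin_cases i <;> fin_cases j
    · simp only [Fin.mk_zero, Fin.mk_one, hD10, hE10, hEc, hgs]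
      set G00 := g p 0 0
      set G01 := g p 0 1
      set G11 := g p 1 1
      set W0 := ω 0 p
      set W1 := ω 1 p
      set Q00 := pd 0 (ω 0) p
      set Q01 := pd 0 (ω 1) p
      set Q10 := pd 1 (ω 0) p
      set Q11 := pd 1 (ω 1) p
      set D000 := pd 0 (fun y => g y 0 0) p
      set D001 := pd 0 (fun y => g y 0 1) p
      set D011 := pd 0 (fun y => g y 1 1) p
      set D100 := pd 1 (fun y => g y 0 0) p
      set D101 := pd 1 (fun y => g y 0 1) p
      set D111 := pd 1 (fun y => g y 1 1) p
      set S000 := pd 0 (pd 0 (fun y => g y 0 0)) p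
      set S001 := pd 0 (pd 0 (fun y => g y 0 1)) p
      set S011 := pd 0 (pd 0 (fun y => g y 1 1)) p
      set S100 := pd 0 (pd 1 (fun y => g y 0 0)) p
      set S101 := pd 0 (pd 1 (fun y => g y 0 1)) p
      set S111 := pd 0 (pd 1 (fun y => g y 1 1)) p
      set T00 := pd 1 (pd 1 (fun y => g y 0 0)) p
      set T01 := pd 1 (pd 1 (fun y => g y 0 1)) p
      set T11 := pd 1 (pd 1 (fun y => g y 1 1)) p
      set R := (G00 * G11 - G01 * G01)⁻¹ with hRdef
      have hR : (G00 * G11 - G01 * G01) * R = 1 := by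
        rw [hRdef]; exact mul_inv_cancel₀ hE0
      clear_value G00 G01 G11 W0 W1 Q00 Q01 Q10 Q11 D000 D001 D011 D100 D101 D111 S000 S001 S011 S100 S101 S111 T00 T01 T11 R
      linear_combination ((-1/4 : ℝ)*D000*D011*G00*G11*R^2 + (1/2 : ℝ)*D000*D101*G00*G11*R^2 + (-1/4 : ℝ)*D000*D111*G00*G01*R^2 + (1/2 : ℝ)*D001*D011*G00*G01*R^2 + (-1 : ℝ)*D001*D101*G00*G01*R^2 + (1/2 : ℝ)*D001*D111*G00^2*R^2 + (1/4 : ℝ)*D011*D100*G00*G01*R^2 + (-1/4 : ℝ)*D011^2*G00^2*R^2 + (1/2 : ℝ)*D100*D101*G00*G01*R^2 + (-1/4 : ℝ)*D100*D111*G00^2*R^2 + (-1/4 : ℝ)*D100^2*G00*G11*R^2 + (1/2 : ℝ)*G00*R*S011 + (-1 : ℝ)*G00*R*S101 + (1/2 : ℝ)*G00*R*T00) * hR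
    · simp only [Fin.mk_zero, Fin.mk_one, hD10, hE10, hEc, hgs]
      set G00 := g p 0 0
      set G01 := g p 0 1
      set G11 := g p 1 1
      set W0 := ω 0 p
      set W1 := ω 1 p
      set Q00 := pd 0 (ω 0) p
      set Q01 := pd 0 (ω 1) p
      set Q10 := pd 1 (ω 0) p
      set Q11 := pd 1 (ω 1) p
      set D000 := pd 0 (fun y => g y 0 0) p
      set D001 := pd 0 (fun y => g y 0 1) p
      set D011 := pd 0 (fun y => g y 1 1) p
      set D100 := pd 1 (fun y => g y 0 0) p
      set D101 := pd 1 (fun y => g y 0 1) p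
      set D111 := pd 1 (fun y => g y 1 1) p
      set S000 := pd 0 (pd 0 (fun y => g y 0 0)) p
      set S001 := pd 0 (pd 0 (fun y => g y 0 1)) p
      set S011 := pd 0 (pd 0 (fun y => g y 1 1)) p
      set S100 := pd 0 (pd 1 (fun y => g y 0 0)) p
      set S101 := pd 0 (pd 1 (fun y => g y 0 1)) p
      set S111 := pd 0 (pd 1 (fun y => g y 1 1)) p
      set T00 := pd 1 (pd 1 (fun y => g y 0 0)) p
      set T01 := pd 1 (pd 1 (fun y => g y 0 1)) p
      set T11 := pd 1 (pd 1 (fun y => g y 1 1)) p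
      set R := (G00 * G11 - G01 * G01)⁻¹ with hRdef
      have hR : (G00 * G11 - G01 * G01) * R = 1 := by
        rw [hRdef]; exact mul_inv_cancel₀ hE0
      clear_value G00 G01 G11 W0 W1 Q00 Q01 Q10 Q11 D000 D001 D011 D100 D101 D111 S000 S001 S011 S100 S101 S111 T00 T01 T11 R
      linear_combination ((-1/4 : ℝ)*D000*D011*G01*G11*R^2 + (1/2 : ℝ)*D000*D101*G01*G11*R^2 + (-1/4 : ℝ)*D000*D111*G01^2*R^2 + (1/2 : ℝ)*D001*D011*G01^2*R^2 + (-1 : ℝ)*D001*D101*G01^2*R^2 + (1/2 : ℝ)*D001*D111*G00*G01*R^2 + (1/4 : ℝ)*D011*D100*G01^2*R^2 + (-1/4 : ℝ)*D011^2*G00*G01*R^2 + (1/2 : ℝ)*D100*D101*G01^2*R^2 + (-1/4 : ℝ)*D100*D111*G00*G01*R^2 + (-1/4 : ℝ)*D100^2*G01*G11*R^2 + (1/2 : ℝ)*G01*R*S011 + (-1 : ℝ)*G01*R*S101 + (1/2 : ℝ)*G01*R*T00) * hR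
    · simp only [Fin.mk_zero, Fin.mk_one, hD10, hE10, hEc, hgs]
      set G00 := g p 0 0
      set G01 := g p 0 1
      set G11 := g p 1 1
      set W0 := ω 0 p
      set W1 := ω 1 p
      set Q00 := pd 0 (ω 0) p
      set Q01 := pd 0 (ω 1) p
      set Q10 := pd 1 (ω 0) p
      set Q11 := pd 1 (ω 1) p
      set D000 := pd 0 (fun y => g y 0 0) p
      set D001 := pd 0 (fun y => g y 0 1) p
      set D011 := pd 0 (fun y => g y 1 1) p
      set D100 := pd 1 (fun y => g y 0 0) p
      set D101 := pd 1 (fun y => g y 0 1) p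
      set D111 := pd 1 (fun y => g y 1 1) p
      set S000 := pd 0 (pd 0 (fun y => g y 0 0)) p
      set S001 := pd 0 (pd 0 (fun y => g y 0 1)) p
      set S011 := pd 0 (pd 0 (fun y => g y 1 1)) p
      set S100 := pd 0 (pd 1 (fun y => g y 0 0)) p
      set S101 := pd 0 (pd 1 (fun y => g y 0 1)) p
      set S111 := pd 0 (pd 1 (fun y => g y 1 1)) p
      set T00 := pd 1 (pd 1 (fun y => g y 0 0)) p
      set T01 := pd 1 (pd 1 (fun y => g y 0 1)) p
      set T11 := pd 1 (pd 1 (fun y => g y 1 1)) p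
      set R := (G00 * G11 - G01 * G01)⁻¹ with hRdef
      have hR : (G00 * G11 - G01 * G01) * R = 1 := by
        rw [hRdef]; exact mul_inv_cancel₀ hE0
      clear_value G00 G01 G11 W0 W1 Q00 Q01 Q10 Q11 D000 D001 D011 D100 D101 D111 S000 S001 S011 S100 S101 S111 T00 T01 T11 R
      linear_combination ((-1/4 : ℝ)*D000*D011*G01*G11*R^2 + (1/2 : ℝ)*D000*D101*G01*G11*R^2 + (-1/4 : ℝ)*D000*D111*G01^2*R^2 + (1/2 : ℝ)*D001*D011*G01^2*R^2 + (-1 : ℝ)*D001*D101*G01^2*R^2 + (1/2 : ℝ)*D001*D111*G00*G01*R^2 + (1/4 : ℝ)*D011*D100*G01^2*R^2 + (-1/4 : ℝ)*D011^2*G00*G01*R^2 + (1/2 : ℝ)*D100*D101*G01^2*R^2 + (-1/4 : ℝ)*D100*D111*G00*G01*R^2 + (-1/4 : ℝ)*D100^2*G01*G11*R^2 + (1/2 : ℝ)*G01*R*S011 + (-1 : ℝ)*G01*R*S101 + (1/2 : ℝ)*G01*R*T00) * hR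
    · simp only [Fin.mk_zero, Fin.mk_one, hD10, hE10, hEc, hgs]
      set G00 := g p 0 0
      set G01 := g p 0 1
      set G11 := g p 1 1
      set W0 := ω 0 p
      set W1 := ω 1 p
      set Q00 := pd 0 (ω 0) p
      set Q01 := pd 0 (ω 1) p
      set Q10 := pd 1 (ω 0) p
      set Q11 := pd 1 (ω 1) p
      set D000 := pd 0 (fun y => g y 0 0) p
      set D001 := pd 0 (fun y => g y 0 1) p
      set D011 := pd 0 (fun y => g y 1 1) p
      set D100 := pd 1 (fun y => g y 0 0) p
      set D101 := pd 1 (fun y => g y 0 1) p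
      set D111 := pd 1 (fun y => g y 1 1) p
      set S000 := pd 0 (pd 0 (fun y => g y 0 0)) p
      set S001 := pd 0 (pd 0 (fun y => g y 0 1)) p
      set S011 := pd 0 (pd 0 (fun y => g y 1 1)) p
      set S100 := pd 0 (pd 1 (fun y => g y 0 0)) p
      set S101 := pd 0 (pd 1 (fun y => g y 0 1)) p
      set S111 := pd 0 (pd 1 (fun y => g y 1 1)) p
      set T00 := pd 1 (pd 1 (fun y => g y 0 0)) p
      set T01 := pd 1 (pd 1 (fun y => g y 0 1)) p
      set T11 := pd 1 (pd 1 (fun y => g y 1 1)) p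
      set R := (G00 * G11 - G01 * G01)⁻¹ with hRdef
      have hR : (G00 * G11 - G01 * G01) * R = 1 := by
        rw [hRdef]; exact mul_inv_cancel₀ hE0
      clear_value G00 G01 G11 W0 W1 Q00 Q01 Q10 Q11 D000 D001 D011 D100 D101 D111 S000 S001 S011 S100 S101 S111 T00 T01 T11 R
      linear_combination ((-1/4 : ℝ)*D000*D011*G11^2*R^2 + (1/2 : ℝ)*D000*D101*G11^2*R^2 + (-1/4 : ℝ)*D000*D111*G01*G11*R^2 + (1/2 : ℝ)*D001*D011*G01*G11*R^2 + (-1 : ℝ)*D001*D101*G01*G11*R^2 + (1/2 : ℝ)*D001*D111*G00*G11*R^2 + (1/4 : ℝ)*D011*D100*G01*G11*R^2 + (-1/4 : ℝ)*D011^2*G00*G11*R^2 + (1/2 : ℝ)*D100*D101*G01*G11*R^2 + (-1/4 : ℝ)*D100*D111*G00*G11*R^2 + (-1/4 : ℝ)*D100^2*G11^2*R^2 + (1/2 : ℝ)*G11*R*S011 + (-1 : ℝ)*G11*R*S101 + (1/2 : ℝ)*G11*R*T00) * hR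
  -- assemble
  intro a b
  have h1 := hLie a b
  have h2 := hAnti a b
  have h3 := hHor p hp a b
  have h4 := hRic a b
  have h5 := hΩε a b
  linear_combination (1/2) * h1 + (1/2) * h2 + h3 - h4 - h5
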